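/- arXiv:2205.10968 — 7 statements merged into one kernel-verified Lean document; each statement's English description precedes it below -/
import Mathlib

section
/- Let n ≥ 1 and let K be a symmetric n×n integer matrix with K_{ij} ≤ 0 for all i ≠ j and with every row sum ∑_j K_{ij} ≥ 0 (i.e., K is the Kirchhoff matrix of a quiver). Then for every 1 ≤ k ≤ n, the k-th smallest eigenvalue satisfies λ_k ≤ d_k + d_{k−1}, where d_1 ≤ … ≤ d_n are the diagonal entries of K listed in increasing order and d_0 = 0. -/
/-!
Let `S` be the principal submatrix of `K` on the `k` vertices of smallest degree, so that its
diagonal is `d_1 ≤ ⋯ ≤ d_k`. By the Courant–Fischer principle (Cauchy interlacing), `λ_k` is at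
most some eigenvalue `μ` of `S`. Like `K`, the matrix `S` satisfies `∑_{q ≠ p} |S p q| ≤ S p p`.
For an eigenvector `v` of `μ`, pick `p` with `|v p|` maximal and `q ≠ p` with `|v q|` maximal
among the rest; rows `p` and `q` of `S v = μ v` give `(μ - S p p) |v p| ≤ S p p |v q|` and
`(μ - S q q) |v q| ≤ S q q |v p|`. Hence `(μ - S p p) (μ - S q q) ≤ S p p S q q` (a Brauer–Cassini
oval), which forces `μ ≤ S p p + S q q ≤ d_k + d_{k-1}`.
-/

open Matrix Finset

section ExtendByZero

variable {R κ ι : Type*} [CommSemiring R] [Fintype κ] [Fintype ι] {e : κ → ι}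

lemma Function.Injective.extend_zero_dotProduct (he : Function.Injective e) (y : κ → R)
    (w : ι → R) : Function.extend e y 0 ⬝ᵥ w = y ⬝ᵥ (w ∘ e) :=
  (Fintype.sum_of_injective e he _ _
    (fun j hj => by rw [Function.extend_apply' _ _ _ hj, Pi.zero_apply, zero_mul])
    (fun i => by rw [he.extend_apply]; rfl)).symm

lemma Function.Injective.extend_zero_dotProduct_mulVec (he : Function.Injective e)
    (A : Matrix ι ι R) (y : κ → R) :
    Function.extend e y 0 ⬝ᵥ A *ᵥ Function.extend e y 0 = y ⬝ᵥ A.submatrix e e *ᵥ y := by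
  rw [he.extend_zero_dotProduct]
  congr 1
  ext i
  simp only [Function.comp_apply, mulVec, dotProduct_comm (A (e i)), he.extend_zero_dotProduct]
  exact dotProduct_comm _ _

end ExtendByZero

namespace Matrix.IsHermitian

section

variable {ι : Type*} [Fintype ι] [DecidableEq ι] {A : Matrix ι ι ℝ}

lemma eigenvectorBasis_dotProduct_mulVec (hA : A.IsHermitian) (i : ι) (x : ι → ℝ) :
    ⇑(hA.eigenvectorBasis i) ⬝ᵥ A *ᵥ x = hA.eigenvalues i * (⇑(hA.eigenvectorBasis i) ⬝ᵥ x) := by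
  rw [dotProduct_mulVec, ← mulVec_transpose, ← conjTranspose_eq_transpose_of_trivial, hA.eq,
    hA.mulVec_eigenvectorBasis, smul_dotProduct, smul_eq_mul]

lemma dotProduct_mulVec_eq_sum (hA : A.IsHermitian) (x : ι → ℝ) :
    x ⬝ᵥ A *ᵥ x = ∑ i, hA.eigenvalues i * (⇑(hA.eigenvectorBasis i) ⬝ᵥ x) ^ 2 := by
  have h := hA.eigenvectorBasis.sum_inner_mul_inner (WithLp.toLp 2 x) (WithLp.toLp 2 (A *ᵥ x))
  simp only [EuclideanSpace.inner_eq_star_dotProduct, star_trivial] at h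
  rw [dotProduct_comm, ← h]
  refine sum_congr rfl fun i _ => ?_
  rw [dotProduct_comm (A *ᵥ x), eigenvectorBasis_dotProduct_mulVec]
  ring

lemma dotProduct_self_eq_sum (hA : A.IsHermitian) (x : ι → ℝ) :
    x ⬝ᵥ x = ∑ i, (⇑(hA.eigenvectorBasis i) ⬝ᵥ x) ^ 2 := by
  have h := hA.eigenvectorBasis.sum_inner_mul_inner (WithLp.toLp 2 x) (WithLp.toLp 2 x)
  simp only [EuclideanSpace.inner_eq_star_dotProduct, star_trivial] at h
  rw [← h]
  refine sum_congr rfl fun i _ => ?_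
  rw [dotProduct_comm x]
  ring

lemma dotProduct_mulVec_le (hA : A.IsHermitian) {c : ℝ} (hc : ∀ i, hA.eigenvalues i ≤ c)
    (x : ι → ℝ) : x ⬝ᵥ A *ᵥ x ≤ c * (x ⬝ᵥ x) := by
  rw [hA.dotProduct_mulVec_eq_sum, hA.dotProduct_self_eq_sum, mul_sum]
  exact sum_le_sum fun i _ => mul_le_mul_of_nonneg_right (hc i) (sq_nonneg _)

lemma le_dotProduct_mulVec (hA : A.IsHermitian) {c : ℝ} {x : ι → ℝ}
    (hc : ∀ i, ⇑(hA.eigenvectorBasis i) ⬝ᵥ x ≠ 0 → c ≤ hA.eigenvalues i) :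
    c * (x ⬝ᵥ x) ≤ x ⬝ᵥ A *ᵥ x := by
  rw [hA.dotProduct_mulVec_eq_sum, hA.dotProduct_self_eq_sum, mul_sum]
  refine sum_le_sum fun i _ => ?_
  by_cases hi : ⇑(hA.eigenvectorBasis i) ⬝ᵥ x = 0
  · simp [hi]
  · exact mul_le_mul_of_nonneg_right (hc i hi) (sq_nonneg _)

end

variable {n : ℕ} {A : Matrix (Fin n) (Fin n) ℝ}

theorem exists_mem_ne_zero_sortedEigenvalue_mul_le (hA : A.IsHermitian)
    (U : Submodule ℝ (Fin n → ℝ)) (i : Fin n) (hi : (i : ℕ) < Module.finrank ℝ U) :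
    ∃ x ∈ U, x ≠ 0 ∧
      (hA.eigenvalues ∘ Tuple.sort hA.eigenvalues) i * (x ⬝ᵥ x) ≤ x ⬝ᵥ A *ᵥ x := by
  set σ := Tuple.sort hA.eigenvalues
  -- the rows of `M` are the eigenvectors of the `i` smallest eigenvalues
  let M : Matrix (Fin i) (Fin n) ℝ := .of fun j => hA.eigenvectorBasis (σ (Fin.castLE i.2.le j))
  have hker : LinearMap.ker (M.toLin' ∘ₗ U.subtype) ≠ ⊥ :=
    LinearMap.ker_ne_bot_of_finrank_lt (by rwa [Module.finrank_fin_fun])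
  obtain ⟨⟨x, hxU⟩, hMx, hx0⟩ := Submodule.exists_mem_ne_zero_of_ne_bot hker
  refine ⟨x, hxU, fun h => hx0 (Subtype.ext h), hA.le_dotProduct_mulVec fun l hl => ?_⟩
  obtain ⟨j, rfl⟩ := σ.surjective l
  have hij : i ≤ j := by
    by_contra! hji
    exact hl (congrFun (LinearMap.mem_ker.mp hMx) ⟨j, hji⟩)
  exact Tuple.monotone_sort hA.eigenvalues hij

theorem exists_sortedEigenvalue_le_eigenvalues_submatrix (hA : A.IsHermitian)
    {κ : Type*} [Fintype κ] [DecidableEq κ] {e : κ → Fin n} (he : Function.Injective e)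
    (i : Fin n) (hi : (i : ℕ) < Fintype.card κ) :
    ∃ j, (hA.eigenvalues ∘ Tuple.sort hA.eigenvalues) i ≤ (hA.submatrix e).eigenvalues j := by
  let P := Function.ExtendByZero.linearMap ℝ e
  have hP : Module.finrank ℝ (LinearMap.range P) = Fintype.card κ := by
    rw [LinearMap.finrank_range_of_inj (Function.extend_injective he 0),
      Module.finrank_fintype_fun_eq_card]
  obtain ⟨_, ⟨y, rfl⟩, hy0, hlow⟩ :=
    hA.exists_mem_ne_zero_sortedEigenvalue_mul_le (LinearMap.range P) i (hP ▸ hi)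
  have hPy : P y = Function.extend e y 0 := rfl
  rw [hPy, he.extend_zero_dotProduct_mulVec,
    he.extend_zero_dotProduct, Function.extend_comp he] at hlow
  have hy : y ≠ 0 := by rintro rfl; exact hy0 (map_zero P)
  have : Nonempty κ := Fintype.card_pos_iff.mp ((Nat.zero_le i).trans_lt hi)
  obtain ⟨j, hj⟩ := Finite.exists_max (hA.submatrix e).eigenvalues
  refine ⟨j, le_of_mul_le_mul_right ?_ (?_ : 0 < y ⬝ᵥ y)⟩
  · exact hlow.trans ((hA.submatrix e).dotProduct_mulVec_le hj y)
  · simpa using dotProduct_self_star_pos_iff.mpr hy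

end Matrix.IsHermitian

namespace Matrix

variable {ι : Type*} [Fintype ι] [DecidableEq ι]

-- The diagonal itself, not its absolute value, dominates; in particular it is nonnegative.
def IsDiagDominant (A : Matrix ι ι ℝ) : Prop :=
  ∀ i, ∑ j ∈ univ.erase i, |A i j| ≤ A i i

variable {A : Matrix ι ι ℝ}

lemma sub_diag_mul_abs_le_of_mulVec_eq_smul {v : ι → ℝ} {μ : ℝ} (hv : A *ᵥ v = μ • v)
    (p : ι) {M : ℝ} (hM : ∀ j ∈ univ.erase p, |v j| ≤ M) :
    (μ - A p p) * |v p| ≤ (∑ j ∈ univ.erase p, |A p j|) * M := by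
  have hrow : (μ - A p p) * v p = ∑ j ∈ univ.erase p, A p j * v j := by
    have hp := congrFun hv p
    rw [Pi.smul_apply, smul_eq_mul, mulVec, dotProduct, ← add_sum_erase _ _ (mem_univ p)] at hp
    linarith
  calc (μ - A p p) * |v p| ≤ |(μ - A p p) * v p| := by
        rw [abs_mul]; exact mul_le_mul_of_nonneg_right (le_abs_self _) (abs_nonneg _)
    _ ≤ ∑ j ∈ univ.erase p, |A p j| * |v j| := by
        rw [hrow]
        simpa only [abs_mul] using abs_sum_le_sum_abs (fun j => A p j * v j) (univ.erase p)
    _ ≤ ∑ j ∈ univ.erase p, |A p j| * M :=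
        sum_le_sum fun j hj => mul_le_mul_of_nonneg_left (hM j hj) (abs_nonneg _)
    _ = (∑ j ∈ univ.erase p, |A p j|) * M := (sum_mul _ _ _).symm

lemma isDiagDominant_of_nonpos_of_sum_nonneg (hoff : ∀ i j, i ≠ j → A i j ≤ 0)
    (hrow : ∀ i, 0 ≤ ∑ j, A i j) : A.IsDiagDominant := by
  intro i
  have habs : ∀ j ∈ univ.erase i, |A i j| = -A i j := fun j hj =>
    abs_of_nonpos (hoff i j (ne_of_mem_erase hj).symm)
  rw [sum_congr rfl habs, sum_neg_distrib]
  linarith [hrow i, add_sum_erase univ (A i) (mem_univ i)]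

namespace IsDiagDominant

lemma diag_nonneg (h : A.IsDiagDominant) (i : ι) : 0 ≤ A i i :=
  (sum_nonneg fun _ _ => abs_nonneg _).trans (h i)

lemma submatrix (h : A.IsDiagDominant) {κ : Type*} [Fintype κ] [DecidableEq κ] {e : κ → ι}
    (he : Function.Injective e) : (A.submatrix e e).IsDiagDominant := by
  intro p
  calc ∑ j ∈ univ.erase p, |A (e p) (e j)| = ∑ j ∈ (univ.erase p).map ⟨e, he⟩, |A (e p) j| :=
        (sum_map _ ⟨e, he⟩ fun j => |A (e p) j|).symm
    _ ≤ ∑ j ∈ univ.erase (e p), |A (e p) j| := by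
        refine sum_le_sum_of_subset_of_nonneg (fun j hj => ?_) fun _ _ _ => abs_nonneg _
        obtain ⟨l, hl, rfl⟩ := mem_map.mp hj
        exact mem_erase.mpr ⟨he.ne (ne_of_mem_erase hl), mem_univ _⟩
    _ ≤ A (e p) (e p) := h (e p)

theorem exists_le_diag_or_le_diag_add_diag (h : A.IsDiagDominant) {v : ι → ℝ} (hv0 : v ≠ 0)
    {μ : ℝ} (hv : A *ᵥ v = μ • v) : ∃ p, μ ≤ A p p ∨ ∃ q ≠ p, μ ≤ A p p + A q q := by
  have : Nonempty ι := by
    by_contra hι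
    exact hv0 (funext fun j => (hι ⟨j⟩).elim)
  obtain ⟨p, hp⟩ := Finite.exists_max fun j => |v j|
  have hvp : 0 < |v p| := by
    refine abs_pos.mpr fun hvp => hv0 (funext fun j => abs_nonpos_iff.mp ?_)
    simpa [hvp] using hp j
  refine ⟨p, ?_⟩
  rcases (univ.erase p).eq_empty_or_nonempty with hp_only | ⟨q₀, hq₀⟩
  · left
    have hrow := sub_diag_mul_abs_le_of_mulVec_eq_smul hv p (M := 0) (by simp [hp_only])
    rw [mul_zero] at hrow
    linarith [nonpos_of_mul_nonpos_left hrow hvp]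
  · right
    obtain ⟨q, hq, hqmax⟩ := exists_max_image _ (fun j => |v j|) ⟨q₀, hq₀⟩
    refine ⟨q, ne_of_mem_erase hq, ?_⟩
    have hrow_p := (sub_diag_mul_abs_le_of_mulVec_eq_smul hv p hqmax).trans
      (mul_le_mul_of_nonneg_right (h p) (abs_nonneg _))
    have hrow_q := (sub_diag_mul_abs_le_of_mulVec_eq_smul hv q fun j _ => hp j).trans
      (mul_le_mul_of_nonneg_right (h q) hvp.le)
    have hpp := h.diag_nonneg p
    have hqq := h.diag_nonneg q
    -- the two row estimates multiply to `(μ - A p p) * (μ - A q q) ≤ A p p * A q q`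
    by_contra! hμ
    nlinarith [mul_le_mul_of_nonneg_left hrow_q hpp,
      mul_le_mul_of_nonneg_right hrow_p (by linarith : (0 : ℝ) ≤ μ - A q q),
      mul_pos (mul_pos (by linarith : (0 : ℝ) < μ) (sub_pos.mpr hμ)) hvp]

end IsDiagDominant

end Matrix

/-- **Theorem 1 (upper bound for quivers).**
If `K` is the Kirchhoff matrix of a quiver (symmetric integer matrix with
nonpositive off-diagonal entries and nonnegative row sums) on `n ≥ 1` vertices,
then the `k`-th smallest eigenvalue satisfies `λ_k ≤ d_k + d_{k-1}`, where
`d_1 ≤ ⋯ ≤ d_n` are the sorted diagonal entries and `d_0 = 0`. -/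
theorem quiver_eigenvalue_upper_bound
    (n : ℕ) (K : Matrix (Fin n) (Fin n) ℤ)
    (hoff : ∀ i j : Fin n, i ≠ j → K i j ≤ 0)
    (hrow : ∀ i : Fin n, 0 ≤ ∑ j, K i j)
    (hK : (K.map (Int.cast : ℤ → ℝ)).IsHermitian)
    (lam : Fin n → ℝ)
    (hlam : lam = hK.eigenvalues ∘ Tuple.sort hK.eigenvalues)
    (d : Fin n → ℤ)
    (hd : d = (fun i => K i i) ∘ Tuple.sort (fun i => K i i)) :
    ∀ (k : ℕ) (hk1 : 1 ≤ k) (hkn : k ≤ n),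
      lam ⟨k - 1, by omega⟩ ≤
        (d ⟨k - 1, by omega⟩ : ℝ) +
          (if h : 2 ≤ k then (d ⟨k - 2, by omega⟩ : ℝ) else 0) := by
  intro k hk1 hkn
  subst hlam hd
  set A := K.map (Int.cast : ℤ → ℝ)
  have hA : A.IsDiagDominant := isDiagDominant_of_nonpos_of_sum_nonneg
    (fun i j hij => by simpa [A] using hoff i j hij)
    (fun i => by simpa [A] using (Int.cast_le (R := ℝ)).mpr (hrow i))
  set σ := Tuple.sort fun i => K i i
  -- restrict `A` to the `k` vertices of smallest degree
  let e : Fin k → Fin n := σ ∘ Fin.castLE hkn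
  have he : Function.Injective e := σ.injective.comp (Fin.castLE_injective hkn)
  have hdeg : ∀ p : Fin k, ∀ m (hm : m < n), (p : ℕ) ≤ m →
      A.submatrix e e p p ≤ (((fun i => K i i) ∘ σ) ⟨m, hm⟩ : ℝ) := fun p m hm hpm =>
    Int.cast_le.mpr (Tuple.monotone_sort (fun i => K i i) (Fin.mk_le_mk.mpr hpm))
  obtain ⟨j, hj⟩ := hK.exists_sortedEigenvalue_le_eigenvalues_submatrix he ⟨k - 1, by omega⟩
    (by simp only [Fintype.card_fin]; omega)
  refine hj.trans ?_
  have hS := hK.submatrix e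
  obtain ⟨p, hp | ⟨q, hqp, hpq⟩⟩ := (hA.submatrix he).exists_le_diag_or_le_diag_add_diag
    (hS.eigenvectorBasis.orthonormal.ne_zero j ∘ (WithLp.ofLp_eq_zero 2).mp)
    (hS.mulVec_eigenvectorBasis j)
  · refine hp.trans ((hdeg p _ _ (by omega)).trans (le_add_of_nonneg_right ?_))
    split_ifs
    exacts [hA.diag_nonneg _, le_rfl]
  · have hk2 : 2 ≤ k := by have := Fin.val_ne_of_ne hqp; omega
    rw [dif_pos hk2]
    rcases lt_or_gt_of_ne hqp with hlt | hlt
    · linarith [hdeg p (k - 1) (by omega) (by omega), hdeg q (k - 2) (by omega) (by omega)]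
    · linarith [hdeg q (k - 1) (by omega) (by omega), hdeg p (k - 2) (by omega) (by omega)]
end

section
/- (Anderson–Morley bound for quivers.) Let n ≥ 2 and let K be a symmetric n×n integer matrix with K_{ij} ≤ 0 for all i ≠ j and with every row sum ∑_j K_{ij} ≥ 0 (i.e., K is the Kirchhoff matrix of a quiver). Then the largest eigenvalue of K satisfies λ_n ≤ d_n + d_{n−1}, where d_n and d_{n−1} are the largest and second largest diagonal entries of K. -/
/-!
Let `x` be an eigenvector for the eigenvalue `μ`, let `i` be a vertex where `|x|` is largest and
`j ≠ i` one where it is largest among the remaining vertices. Reading the eigenvalue equation at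
the rows `i` and `j` (Brauer's argument for his ovals of Cassini) gives
`|μ - K i i| |μ - K j j| ≤ R i R j`, where `R k` is the off-diagonal absolute row sum. For a
Kirchhoff matrix `R k ≤ K k k`, and `|μ - a| |μ - b| ≤ a b` with `a, b ≥ 0` forces `μ ≤ a + b`.
-/

open Matrix Finset

section Cassini

variable {𝕜 ι : Type*} [NormedField 𝕜] [Fintype ι] [DecidableEq ι]

theorem norm_sub_diag_mul_le_of_mulVec_eq_smul {A : Matrix ι ι 𝕜} {x : ι → 𝕜} {μ : 𝕜}
    (hx : A *ᵥ x = μ • x) (i : ι) {c : ℝ} (hc : ∀ j, j ≠ i → ‖x j‖ ≤ c) :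
    ‖μ - A i i‖ * ‖x i‖ ≤ (∑ j ∈ univ.erase i, ‖A i j‖) * c := by
  have hrow : (μ - A i i) * x i = ∑ j ∈ univ.erase i, A i j * x j := by
    have h := congrFun hx i
    simp only [mulVec, dotProduct, Pi.smul_apply, smul_eq_mul] at h
    rw [sub_mul, ← h, ← add_sum_erase _ _ (mem_univ i)]
    ring
  calc ‖μ - A i i‖ * ‖x i‖ = ‖∑ j ∈ univ.erase i, A i j * x j‖ := by rw [← norm_mul, hrow]
    _ ≤ ∑ j ∈ univ.erase i, ‖A i j‖ * ‖x j‖ := by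
      simpa only [norm_mul] using norm_sum_le (univ.erase i) fun j => A i j * x j
    _ ≤ ∑ j ∈ univ.erase i, ‖A i j‖ * c := by
      gcongr with j hj
      exact hc j (ne_of_mem_erase hj)
    _ = (∑ j ∈ univ.erase i, ‖A i j‖) * c := (sum_mul ..).symm

/-- Brauer's ovals of Cassini theorem. -/
theorem exists_ne_norm_sub_diag_mul_le_of_mulVec_eq_smul [Nontrivial ι] {A : Matrix ι ι 𝕜}
    {x : ι → 𝕜} {μ : 𝕜} (hx0 : x ≠ 0) (hx : A *ᵥ x = μ • x) :
    ∃ i j, i ≠ j ∧ ‖μ - A i i‖ * ‖μ - A j j‖ ≤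
      (∑ k ∈ univ.erase i, ‖A i k‖) * ∑ k ∈ univ.erase j, ‖A j k‖ := by
  obtain ⟨i, -, hi⟩ := exists_max_image univ (fun k => ‖x k‖) univ_nonempty
  obtain ⟨j₀, hj₀⟩ := exists_ne i
  obtain ⟨j, hj, hji⟩ := exists_max_image (univ.erase i) (fun k => ‖x k‖)
    ⟨j₀, mem_erase.mpr ⟨hj₀, mem_univ _⟩⟩
  refine ⟨i, j, (ne_of_mem_erase hj).symm, ?_⟩
  have hrow_i := norm_sub_diag_mul_le_of_mulVec_eq_smul hx i (c := ‖x j‖)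
    fun k hk => hji k (mem_erase.mpr ⟨hk, mem_univ k⟩)
  have hrow_j := norm_sub_diag_mul_le_of_mulVec_eq_smul hx j (c := ‖x i‖)
    fun k _ => hi k (mem_univ k)
  have hxi : 0 < ‖x i‖ := by
    obtain ⟨k, hk⟩ := Function.ne_iff.mp hx0
    exact (norm_pos_iff.mpr hk).trans_le (hi k (mem_univ k))
  have hRj : 0 ≤ ∑ k ∈ univ.erase j, ‖A j k‖ := sum_nonneg fun _ _ => norm_nonneg _
  rcases (norm_nonneg (x j)).eq_or_lt with hxj | hxj
  · -- `x` is supported at `i`, so `μ = A i i`.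
    rw [← hxj, mul_zero] at hrow_i
    have hμ : ‖μ - A i i‖ = 0 := (nonpos_of_mul_nonpos_left hrow_i hxi).antisymm (norm_nonneg _)
    rw [hμ, zero_mul]
    exact mul_nonneg (sum_nonneg fun _ _ => norm_nonneg _) hRj
  · refine le_of_mul_le_mul_right ?_ (mul_pos hxi hxj)
    calc ‖μ - A i i‖ * ‖μ - A j j‖ * (‖x i‖ * ‖x j‖)
        = (‖μ - A i i‖ * ‖x i‖) * (‖μ - A j j‖ * ‖x j‖) := by ring
      _ ≤ ((∑ k ∈ univ.erase i, ‖A i k‖) * ‖x j‖) * ((∑ k ∈ univ.erase j, ‖A j k‖) * ‖x i‖) :=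
        mul_le_mul hrow_i hrow_j (by positivity) (by positivity)
      _ = _ := by ring

end Cassini

section DiagonallyDominant

variable {ι : Type*} [Fintype ι] [DecidableEq ι]

theorem sum_erase_norm_le_diag_of_offDiag_nonpos {A : Matrix ι ι ℝ} {i : ι}
    (hoff : ∀ j, j ≠ i → A i j ≤ 0) (hrow : 0 ≤ ∑ j, A i j) :
    ∑ j ∈ univ.erase i, ‖A i j‖ ≤ A i i := by
  have hnorm : ∑ j ∈ univ.erase i, ‖A i j‖ = -∑ j ∈ univ.erase i, A i j := by
    rw [← sum_neg_distrib]
    exact sum_congr rfl fun j hj => Real.norm_of_nonpos (hoff j (ne_of_mem_erase hj))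
  rw [← add_sum_erase _ _ (mem_univ i)] at hrow
  linarith

theorem le_add_of_abs_sub_mul_abs_sub_le {μ a b : ℝ} (ha : 0 ≤ a) (hb : 0 ≤ b)
    (h : |μ - a| * |μ - b| ≤ a * b) : μ ≤ a + b := by
  by_contra! hμ
  rw [abs_of_pos (by linarith), abs_of_pos (by linarith)] at h
  nlinarith

theorem exists_ne_le_diag_add_diag_of_mulVec_eq_smul [Nontrivial ι] {A : Matrix ι ι ℝ}
    (hdom : ∀ i, ∑ j ∈ univ.erase i, ‖A i j‖ ≤ A i i) {x : ι → ℝ} {μ : ℝ} (hx0 : x ≠ 0)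
    (hx : A *ᵥ x = μ • x) : ∃ i j, i ≠ j ∧ μ ≤ A i i + A j j := by
  obtain ⟨i, j, hij, hcassini⟩ := exists_ne_norm_sub_diag_mul_le_of_mulVec_eq_smul hx0 hx
  have hdiag_nonneg k : 0 ≤ A k k := (sum_nonneg fun _ _ => norm_nonneg _).trans (hdom k)
  refine ⟨i, j, hij, le_add_of_abs_sub_mul_abs_sub_le (hdiag_nonneg i) (hdiag_nonneg j) ?_⟩
  exact hcassini.trans (mul_le_mul (hdom i) (hdom j) (sum_nonneg fun _ _ => norm_nonneg _)
    (hdiag_nonneg i))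

end DiagonallyDominant

section SortedTuple

variable {α : Type*} [AddCommMonoid α] {n : ℕ}

theorem Monotone.add_le_last_add_penultimate [PartialOrder α] [IsOrderedAddMonoid α]
    {f : Fin n → α} (hf : Monotone f) {a b : Fin n} (hab : a ≠ b) :
    f a + f b ≤ f ⟨n - 1, Nat.sub_lt a.pos one_pos⟩ + f ⟨n - 2, Nat.sub_lt a.pos two_pos⟩ := by
  wlog hlt : a < b generalizing a b
  · rw [add_comm]
    exact this hab.symm (lt_of_le_of_ne (not_lt.mp hlt) hab.symm)
  rw [add_comm (f a)]
  have hb := b.isLt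
  exact add_le_add (hf (show (b : ℕ) ≤ n - 1 by omega)) (hf (show (a : ℕ) ≤ n - 2 by omega))

theorem add_le_comp_sort_last_add_penultimate [LinearOrder α] [IsOrderedAddMonoid α]
    (f : Fin n → α) {i j : Fin n} (hij : i ≠ j) :
    f i + f j ≤ (f ∘ Tuple.sort f) ⟨n - 1, Nat.sub_lt i.pos one_pos⟩ +
      (f ∘ Tuple.sort f) ⟨n - 2, Nat.sub_lt i.pos two_pos⟩ := by
  simpa using (Tuple.monotone_sort f).add_le_last_add_penultimate
    ((Tuple.sort f).symm.injective.ne hij)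

end SortedTuple

/-- **Anderson–Morley bound for quivers.**
If `K` is the Kirchhoff matrix of a quiver (symmetric integer matrix with
nonpositive off-diagonal entries and nonnegative row sums) on `n ≥ 2` vertices,
then the largest eigenvalue satisfies `λ_n ≤ d_n + d_{n-1}`, where `d_n` and
`d_{n-1}` are the largest and second largest diagonal entries. -/
theorem quiver_spectral_radius_anderson_morley
    (n : ℕ) (hn : 2 ≤ n) (K : Matrix (Fin n) (Fin n) ℤ)
    (hoff : ∀ i j : Fin n, i ≠ j → K i j ≤ 0)
    (hrow : ∀ i : Fin n, 0 ≤ ∑ j, K i j)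
    (hK : (K.map (Int.cast : ℤ → ℝ)).IsHermitian)
    (lam : Fin n → ℝ)
    (hlam : lam = hK.eigenvalues ∘ Tuple.sort hK.eigenvalues)
    (d : Fin n → ℤ)
    (hd : d = (fun i => K i i) ∘ Tuple.sort (fun i => K i i)) :
    lam ⟨n - 1, by omega⟩ ≤
      (d ⟨n - 1, by omega⟩ : ℝ) + (d ⟨n - 2, by omega⟩ : ℝ) := by
  have : Nontrivial (Fin n) := Fin.nontrivial_iff_two_le.mpr hn
  have hdom (i : Fin n) : ∑ j ∈ univ.erase i, ‖K.map (Int.cast : ℤ → ℝ) i j‖ ≤ K i i :=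
    sum_erase_norm_le_diag_of_offDiag_nonpos (fun j hj => by simpa using hoff i j hj.symm)
      (by simpa using (Int.cast_nonneg_iff.mpr (hrow i) : (0 : ℝ) ≤ ((∑ j, K i j : ℤ) : ℝ)))
  set k := Tuple.sort hK.eigenvalues ⟨n - 1, by omega⟩
  have hx0 : ⇑(hK.eigenvectorBasis k) ≠ 0 := by
    simpa using hK.eigenvectorBasis.orthonormal.ne_zero k
  obtain ⟨i, j, hij, hμ⟩ :=
    exists_ne_le_diag_add_diag_of_mulVec_eq_smul hdom hx0 (hK.mulVec_eigenvectorBasis k)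
  have hdiag := add_le_comp_sort_last_add_penultimate (fun i => K i i) hij
  subst hlam hd
  calc hK.eigenvalues k ≤ K i i + K j j := by simpa using hμ
    _ ≤ _ := by exact_mod_cast hdiag
end

section
/- Let G be a connected finite simple graph on n ≥ 2 vertices with Kirchhoff (Laplacian) matrix K, whose eigenvalues are 0 = λ_1 ≤ λ_2 ≤ … ≤ λ_n. Then the pseudo determinant of K (the product of its nonzero eigenvalues, which equals ∏_{k=2}^n λ_k and counts the rooted spanning trees of G) satisfies ∏_{k=2}^n λ_k ≤ 2^n · ∏_{k=1}^n d_k, where d_1 ≤ … ≤ d_n are the vertex degrees of G in increasing order. -/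
open Matrix

/-!
With `0 ≤ λ₁ ≤ … ≤ λₙ` the eigenvalues of `K`,
`∏_{k ≥ 2} λ_k ≤ ∏_k (1 + λ_k) = det (1 + K)`, and Hadamard's inequality bounds `det (1 + K)` by
the product `∏_v (1 + d_v)` of its diagonal entries. Connectivity on at least two vertices gives
`d_v ≥ 1`, hence `1 + d_v ≤ 2 d_v`.

Hadamard's inequality is reduced to unit diagonal by the congruence `M ↦ D M D` with
`D = diag (M_ii^{-1/2})`; then the eigenvalues `μ_i ≥ 0` sum to `n`, and
`∏ μ_i ≤ ∏ exp (μ_i - 1) = 1`.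
-/

namespace Matrix

variable {ι : Type*} [Fintype ι] [DecidableEq ι]

lemma IsHermitian.det_one_add {𝕜 : Type*} [RCLike 𝕜] {A : Matrix ι ι 𝕜} (hA : A.IsHermitian) :
    (1 + A).det = ∏ i, (1 + (hA.eigenvalues i : 𝕜)) := by
  conv_lhs => rw [hA.spectral_theorem, ← map_one (Unitary.conjStarAlgAut 𝕜 _ hA.eigenvectorUnitary),
    ← map_add, Unitary.conjStarAlgAut_apply, det_mul_comm, ← mul_assoc, Unitary.coe_star_mul_self,
    one_mul, ← diagonal_one, diagonal_add, det_diagonal]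
  simp

lemma PosSemidef.det_le_one_of_diag_eq_one {N : Matrix ι ι ℝ} (hN : N.PosSemidef)
    (hdiag : ∀ i, N i i = 1) : N.det ≤ 1 := by
  set μ := hN.isHermitian.eigenvalues
  have hsum : ∑ i, μ i = Fintype.card ι := by
    simpa [Matrix.trace, hdiag] using hN.isHermitian.trace_eq_sum_eigenvalues.symm
  rw [hN.isHermitian.det_eq_prod_eigenvalues]
  calc ∏ i, (μ i : ℝ) ≤ ∏ i, Real.exp (μ i - 1) :=
        Finset.prod_le_prod (fun i _ => hN.eigenvalues_nonneg i)
          (fun i _ => by linarith [Real.add_one_le_exp (μ i - 1)])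
    _ = 1 := by simp [← Real.exp_sum, Finset.sum_sub_distrib, hsum]

theorem PosDef.det_le_prod_diag {M : Matrix ι ι ℝ} (hM : M.PosDef) : M.det ≤ ∏ i, M i i := by
  have hpos : ∀ i, 0 < M i i := fun i => hM.diag_pos
  set D : Matrix ι ι ℝ := diagonal fun i => (√(M i i))⁻¹
  have hN : (D * M * D).PosSemidef := by
    simpa [D] using hM.posSemidef.mul_mul_conjTranspose_same D
  have hdiag : ∀ i, (D * M * D) i i = 1 := fun i => by
    simp only [D, diagonal_mul, mul_diagonal]
    rw [mul_right_comm, ← mul_inv, Real.mul_self_sqrt (hpos i).le, inv_mul_cancel₀ (hpos i).ne']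
  have hdet : (D * M * D).det = M.det / ∏ i, M i i := by
    rw [det_mul, det_mul, det_diagonal, div_eq_mul_inv,
      ← Finset.prod_congr rfl fun i _ => Real.mul_self_sqrt (hpos i).le, Finset.prod_mul_distrib,
      mul_inv, Finset.prod_inv_distrib]
    ring
  have hle := hN.det_le_one_of_diag_eq_one hdiag
  rwa [hdet, div_le_one (Finset.prod_pos fun i _ => hpos i)] at hle

end Matrix

lemma Finset.prod_erase_le_prod_one_add {α : Type*} [DecidableEq α] {s : Finset α} {a : α}
    (ha : a ∈ s) {f : α → ℝ} (hf : ∀ i ∈ s, 0 ≤ f i) :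
    ∏ i ∈ s.erase a, f i ≤ ∏ i ∈ s, (1 + f i) := by
  have hf' : ∀ i ∈ s.erase a, 0 ≤ f i := fun i hi => hf i (mem_of_mem_erase hi)
  rw [← Finset.mul_prod_erase s _ ha]
  calc ∏ i ∈ s.erase a, f i ≤ ∏ i ∈ s.erase a, (1 + f i) :=
        Finset.prod_le_prod hf' fun i _ => le_add_of_nonneg_left zero_le_one
    _ ≤ (1 + f a) * ∏ i ∈ s.erase a, (1 + f i) :=
        le_mul_of_one_le_left (Finset.prod_nonneg fun i hi => by linarith [hf' i hi])
          (le_add_of_nonneg_right (hf a ha))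

lemma SimpleGraph.lapMatrix_apply_self {V R : Type*} [Fintype V] [DecidableEq V] [Ring R]
    (G : SimpleGraph V) [DecidableRel G.Adj] (v : V) :
    G.lapMatrix R v v = G.degree v := by
  simp [SimpleGraph.lapMatrix, SimpleGraph.degMatrix]

/-- For a connected finite simple graph on `n ≥ 2` vertices, the pseudo
determinant of the Kirchhoff matrix (the product `∏_{k=2}^n λ_k` of its
nonzero eigenvalues, counting rooted spanning trees) is at most
`2^n · ∏_k d_k`. -/
theorem graph_pseudo_det_upper_bound
    (n : ℕ) (hn : 2 ≤ n) (G : SimpleGraph (Fin n)) [DecidableRel G.Adj]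
    (hconn : G.Connected)
    (hK : (G.lapMatrix ℝ).IsHermitian)
    (lam : Fin n → ℝ)
    (hlam : lam = hK.eigenvalues ∘ Tuple.sort hK.eigenvalues) :
    ∏ k ∈ Finset.univ.erase (⟨0, by omega⟩ : Fin n), lam k ≤
      2 ^ n * ∏ v : Fin n, (G.degree v : ℝ) := by
  have : Nontrivial (Fin n) := Fin.nontrivial_iff_two_le.mpr hn
  have hdeg (v : Fin n) : (1 : ℝ) ≤ G.degree v := by
    exact_mod_cast hconn.preconnected.degree_pos_of_nontrivial v
  have hdiag (v : Fin n) : (1 + G.lapMatrix ℝ) v v = 1 + G.degree v := by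
    rw [Matrix.add_apply, one_apply_eq, G.lapMatrix_apply_self]
  have hPSD := G.posSemidef_lapMatrix ℝ
  calc ∏ k ∈ Finset.univ.erase _, lam k ≤ ∏ k, (1 + lam k) :=
        Finset.prod_erase_le_prod_one_add (Finset.mem_univ _)
          fun k _ => hlam ▸ hPSD.eigenvalues_nonneg _
    _ = (1 + G.lapMatrix ℝ).det := by
        rw [hK.det_one_add, hlam]
        exact Equiv.prod_comp _ fun i => 1 + hK.eigenvalues i
    _ ≤ ∏ v, (1 + G.lapMatrix ℝ) v v := (PosDef.one.add_posSemidef hPSD).det_le_prod_diag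
    _ ≤ ∏ v, (2 * G.degree v : ℝ) := by
        refine Finset.prod_le_prod (fun v _ => by rw [hdiag]; positivity) fun v _ => ?_
        linarith [hdiag v, hdeg v]
    _ = 2 ^ n * ∏ v, (G.degree v : ℝ) := by
        rw [Finset.prod_mul_distrib, Finset.prod_const, Finset.card_univ, Fintype.card_fin]
end

section
/- Let G be a finite simple graph on n vertices with Kirchhoff (Laplacian) matrix K. Then det(1 + K), which counts the rooted spanning forests of G, satisfies det(1 + K) ≤ ∏_{v} (1 + 2 d(v)), where the product runs over all vertices v of G and d(v) denotes the degree of v. -/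
open Matrix

/-- Hadamard-type ℓ¹ bound: `det A ≤ ∏ i, ∑ j, |A j i|` (product of column
ℓ¹-norms). -/
lemma det_le_prod_col_abs_sum {n : ℕ} (A : Matrix (Fin n) (Fin n) ℝ) :
    A.det ≤ ∏ i : Fin n, ∑ j : Fin n, |A j i| := by
  calc A.det ≤ |A.det| := le_abs_self _
    _ ≤ ∑ σ : Equiv.Perm (Fin n), ∏ i, |A (σ i) i| := by
        rw [Matrix.det_apply]
        refine (Finset.abs_sum_le_sum_abs _ _).trans ?_
        refine Finset.sum_le_sum fun σ _ => ?_
        rcases Int.units_eq_one_or (Equiv.Perm.sign σ) with h | h <;>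
          simp [h, Finset.abs_prod]
    _ ≤ ∑ f : Fin n → Fin n, ∏ i, |A (f i) i| := by
        classical
        have himg : ∑ f ∈ Finset.univ.image (fun σ : Equiv.Perm (Fin n) => ⇑σ),
            ∏ i, |A (f i) i| = ∑ σ : Equiv.Perm (Fin n), ∏ i, |A (σ i) i| :=
          Finset.sum_image (fun σ _ τ _ h => Equiv.coe_fn_injective h)
        rw [← himg]
        exact Finset.sum_le_sum_of_subset_of_nonneg (Finset.subset_univ _)
          (fun f _ _ => Finset.prod_nonneg fun i _ => abs_nonneg _)
    _ = ∏ i : Fin n, ∑ j : Fin n, |A j i| := (Fintype.prod_sum fun i j => |A j i|).symm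

/-- For a finite simple graph `G` with Kirchhoff (Laplacian) matrix `K`, the
rooted spanning forest count `det(1 + K)` is at most `∏_v (1 + 2 d(v))`. -/
theorem graph_forest_det_upper_bound
    (n : ℕ) (G : SimpleGraph (Fin n)) [DecidableRel G.Adj] :
    (1 + G.lapMatrix ℝ).det ≤ ∏ v : Fin n, (1 + 2 * (G.degree v : ℝ)) := by
  refine (det_le_prod_col_abs_sum _).trans_eq ?_
  refine Finset.prod_congr rfl fun v _ => ?_
  have hsum : ∀ j : Fin n, |(1 + G.lapMatrix ℝ) j v|
      = (if j = v then 1 + (G.degree v : ℝ) else 0)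
        + (if G.Adj j v then 1 else 0) := by
    intro j
    by_cases h : j = v
    · subst h
      simp [SimpleGraph.lapMatrix, SimpleGraph.degMatrix, SimpleGraph.adjMatrix,
        Matrix.one_apply, abs_of_nonneg, Nat.cast_nonneg]
      positivity
    · simp [SimpleGraph.lapMatrix, SimpleGraph.degMatrix, SimpleGraph.adjMatrix,
        Matrix.one_apply, h]
      by_cases hadj : G.Adj j v <;> simp [hadj]
  rw [Finset.sum_congr rfl fun j _ => hsum j, Finset.sum_add_distrib]
  rw [Finset.sum_ite_eq' Finset.univ v fun _ => 1 + (G.degree v : ℝ)]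
  have : (∑ j : Fin n, if G.Adj j v then (1 : ℝ) else 0) = (G.degree v : ℝ) := by
    rw [Finset.sum_boole]
    norm_cast
    rw [SimpleGraph.degree, SimpleGraph.neighborFinset_eq_filter]
    congr 1
    ext j
    simp [SimpleGraph.adj_comm]
  rw [this]
  simp
  ring
end

section
/- For the complete graph K_n on n ≥ 1 vertices with Kirchhoff (Laplacian) matrix K, the number of rooted spanning forests is det(1 + K) = (n+1)^{n−1}, where 1 denotes the n×n identity matrix. -/
/-!
The Kirchhoff matrix of `K_n` is `n • 1 - J`, with `J` the all-ones matrix, so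
`1 + K = (n + 1) • 1 - J`. As `J` has rank one, its characteristic polynomial is
`X ^ n - n * X ^ (n - 1)`; evaluating it at `n + 1` gives `(n + 1) ^ (n - 1)`.
-/

open Matrix

instance completeGraphAdjDecidable (n : ℕ) :
    DecidableRel (SimpleGraph.completeGraph (Fin n)).Adj :=
  fun a b => inferInstanceAs (Decidable (a ≠ b))

theorem SimpleGraph.lapMatrix_completeGraph {V : Type*} [Fintype V] [DecidableEq V]
    [DecidableRel (completeGraph V).Adj] (R : Type*) [Ring R] :
    (completeGraph V).lapMatrix R = scalar V (Fintype.card V : R) - vecMulVec 1 1 := by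
  ext i j
  obtain rfl | hij := eq_or_ne i j
  · have hdeg : (completeGraph V).degree i = Fintype.card V - 1 := by
      convert complete_graph_degree i
    simp [lapMatrix, degMatrix, Matrix.natCast_apply, hdeg, Fintype.card_pos_iff.mpr ⟨i⟩]
  · simp [lapMatrix, degMatrix, Matrix.natCast_apply, hij]

theorem Matrix.det_scalar_sub_vecMulVec {ι R : Type*} [Fintype ι] [DecidableEq ι] [CommRing R]
    (t : R) (u v : ι → R) :
    (scalar ι t - vecMulVec u v).det =
      t ^ Fintype.card ι - (u ⬝ᵥ v) * t ^ (Fintype.card ι - 1) := by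
  rw [← eval_charpoly, charpoly_vecMulVec]
  simp only [Polynomial.eval_sub, Polynomial.eval_pow, Polynomial.eval_X, Polynomial.eval_smul,
    smul_eq_mul]

theorem complete_graph_forest_count_general
    (n : ℕ) :
    (1 + (SimpleGraph.completeGraph (Fin n)).lapMatrix ℝ).det = (n + 1 : ℝ) ^ (n - 1) := by
  have hK : 1 + (SimpleGraph.completeGraph (Fin n)).lapMatrix ℝ
      = scalar (Fin n) (n + 1 : ℝ) - vecMulVec 1 1 := by
    rw [SimpleGraph.lapMatrix_completeGraph, Fintype.card_fin, map_add, map_one]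
    abel
  rw [hK, det_scalar_sub_vecMulVec, one_dotProduct_one, Fintype.card_fin]
  cases n with
  | zero => simp
  | succ k =>
    rw [Nat.add_sub_cancel]
    push_cast
    ring

/-- For the complete graph on `n ≥ 1` vertices with Kirchhoff (Laplacian)
matrix `K`, the number of rooted spanning forests is
`det(1 + K) = (n + 1)^(n - 1)`. -/
theorem complete_graph_forest_count
    (n : ℕ) (hn : 1 ≤ n) :
    (1 + (SimpleGraph.completeGraph (Fin n)).lapMatrix ℝ).det = (n + 1 : ℝ) ^ (n - 1) :=
  complete_graph_forest_count_general n
end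

section
/- Let m, n ≥ 1 and let K be the Kirchhoff (Laplacian) matrix of the complete bipartite graph K_{m,n}. Then the characteristic polynomial of K is det(x·1 − K) = x · (x − (m+n)) · (x − m)^{n−1} · (x − n)^{m−1}; equivalently, the Laplacian eigenvalues of K_{m,n} are 0, the value m with multiplicity n−1, the value n with multiplicity m−1, and m+n. -/
/-!
Ordering the vertices side by side, `x • 1 - K` is the block matrix
`[[(x - n) • 1, J], [J, (x - m) • 1]]` with all-ones off-diagonal blocks `J`. Eliminating the
off-diagonal blocks against the scalar block `(x - n) • 1` leaves `(x - n)(x - m) • 1 - m • J`,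
a scalar matrix minus a rank-one matrix, whose determinant is known from `charpoly_vecMulVec`.
Elimination only multiplies by `x - n`, so it can be carried out on the characteristic
polynomial, where `X - n` is a non-zero-divisor and can be cancelled, and then evaluated at `x`.
-/

open Matrix

instance completeBipartiteGraphAdjDecidable (m n : ℕ) :
    DecidableRel (completeBipartiteGraph (Fin m) (Fin n)).Adj :=
  fun a b => inferInstanceAs (Decidable (_ ∨ _))

open Polynomial

namespace Matrix

variable {ι κ R : Type*} [Fintype ι] [Fintype κ] [DecidableEq ι] [DecidableEq κ] [CommRing R]

theorem det_smul_one_sub_eq_eval_charpoly (M : Matrix κ κ R) (t : R) :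
    (t • 1 - M).det = M.charpoly.eval t := by
  rw [eval_charpoly, scalar_apply, smul_one_eq_diagonal]

theorem pow_card_mul_det_fromBlocks_smul_one (a : R) (B : Matrix ι κ R) (C : Matrix κ ι R)
    (D : Matrix κ κ R) :
    a ^ Fintype.card κ * (fromBlocks (a • 1) B C D).det =
      a ^ Fintype.card ι * (a • D - C * B).det := by
  have elim : fromBlocks (a • 1) B C D * fromBlocks 1 (-B) 0 (a • 1) =
      fromBlocks (a • 1) 0 C (a • D - C * B) := by
    rw [fromBlocks_multiply]
    congr 1 <;> simp [sub_eq_neg_add]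
  have := congrArg det elim
  rw [det_mul, det_fromBlocks_zero₂₁, det_fromBlocks_zero₁₂] at this
  simpa [det_smul, mul_comm] using this

theorem det_smul_one_sub_vecMulVec (t : R) (u v : κ → R) :
    (t • 1 - vecMulVec u v).det = t ^ Fintype.card κ - (u ⬝ᵥ v) * t ^ (Fintype.card κ - 1) := by
  rw [det_smul_one_sub_eq_eval_charpoly, charpoly_vecMulVec]
  simp [smul_eq_C_mul]

theorem det_fromBlocks_smul_one_ones [Nonempty ι] [Nonempty κ] {a : R} (ha : IsLeftRegular a)
    (b : R) :
    (fromBlocks (a • 1) (of fun _ _ => 1) (of fun _ _ => 1) (b • 1) :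
        Matrix (ι ⊕ κ) (ι ⊕ κ) R).det =
      a ^ (Fintype.card ι - 1) * b ^ (Fintype.card κ - 1) *
        (a * b - Fintype.card ι * Fintype.card κ) := by
  apply ha.pow (Fintype.card κ)
  have schur : a • b • (1 : Matrix κ κ R) -
      (of fun _ _ => 1 : Matrix κ ι R) * (of fun _ _ => 1 : Matrix ι κ R) =
      (a * b) • 1 - vecMulVec (fun _ => (Fintype.card ι : R)) 1 := by
    ext i j
    simp [mul_apply, smul_smul]
  have dot : (fun _ => (Fintype.card ι : R)) ⬝ᵥ (1 : κ → R) =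
      Fintype.card ι * Fintype.card κ := by
    simp [dotProduct_one, mul_comm]
  dsimp only
  rw [pow_card_mul_det_fromBlocks_smul_one, schur, det_smul_one_sub_vecMulVec, dot]
  obtain ⟨p, hp⟩ := Nat.exists_eq_add_one.mpr (Fintype.card_pos (α := ι))
  obtain ⟨q, hq⟩ := Nat.exists_eq_add_one.mpr (Fintype.card_pos (α := κ))
  rw [hp, hq]
  push_cast
  ring

end Matrix

namespace SimpleGraph

variable {V W : Type*} [Fintype V] [Fintype W]

theorem completeBipartiteGraph_degree_inl [DecidableRel (completeBipartiteGraph V W).Adj]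
    (v : V) : (completeBipartiteGraph V W).degree (.inl v) = Fintype.card W := by
  have : (completeBipartiteGraph V W).neighborFinset (.inl v) = .map .inr .univ := by
    ext (w | w) <;> simp
  rw [← card_neighborFinset_eq_degree, this, Finset.card_map, Finset.card_univ]

theorem completeBipartiteGraph_degree_inr [DecidableRel (completeBipartiteGraph V W).Adj]
    (w : W) : (completeBipartiteGraph V W).degree (.inr w) = Fintype.card V := by
  have : (completeBipartiteGraph V W).neighborFinset (.inr w) = .map .inl .univ := by
    ext (v | v) <;> simp
  rw [← card_neighborFinset_eq_degree, this, Finset.card_map, Finset.card_univ]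

variable [DecidableEq V] [DecidableEq W] [DecidableRel (completeBipartiteGraph V W).Adj]
  {R : Type*} [CommRing R]

theorem lapMatrix_completeBipartiteGraph :
    (completeBipartiteGraph V W).lapMatrix R =
      fromBlocks ((Fintype.card W : R) • 1) (-of fun _ _ => 1) (-of fun _ _ => 1)
        ((Fintype.card V : R) • 1) := by
  ext (i | i) (j | j) <;>
    simp [lapMatrix, degMatrix, completeBipartiteGraph_degree_inl,
      completeBipartiteGraph_degree_inr, one_apply, diagonal_apply]

theorem charpoly_lapMatrix_completeBipartiteGraph [Nonempty V] [Nonempty W] :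
    ((completeBipartiteGraph V W).lapMatrix R).charpoly =
      X * (X - (Fintype.card V + Fintype.card W : R[X])) *
        (X - (Fintype.card V : R[X])) ^ (Fintype.card W - 1) *
        (X - (Fintype.card W : R[X])) ^ (Fintype.card V - 1) := by
  have blocks : charmatrix ((completeBipartiteGraph V W).lapMatrix R) =
      fromBlocks ((X - (Fintype.card W : R[X])) • 1) (of fun _ _ => 1) (of fun _ _ => 1)
        ((X - (Fintype.card V : R[X])) • 1) := by
    rw [lapMatrix_completeBipartiteGraph, charmatrix_fromBlocks]
    simp only [smul_one_eq_diagonal, charmatrix_diagonal, map_natCast]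
    congr 1 <;> ext <;> simp
  have regular : IsLeftRegular (X - (Fintype.card W : R[X])) := by
    simpa using (monic_X_sub_C (Fintype.card W : R)).isRegular.left
  rw [charpoly, blocks, det_fromBlocks_smul_one_ones regular]
  ring

end SimpleGraph

/-- The characteristic polynomial of the Kirchhoff (Laplacian) matrix `K` of
the complete bipartite graph `K_{m,n}` (for `m, n ≥ 1`) is
`det(x·1 - K) = x (x - (m+n)) (x - m)^(n-1) (x - n)^(m-1)`; equivalently, the
Laplacian eigenvalues are `0`, `m` with multiplicity `n-1`, `n` with
multiplicity `m-1`, and `m+n`. -/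
theorem complete_bipartite_laplacian_charpoly
    (m n : ℕ) (hm : 1 ≤ m) (hn : 1 ≤ n) :
    ∀ x : ℝ,
      (x • (1 : Matrix (Fin m ⊕ Fin n) (Fin m ⊕ Fin n) ℝ) -
        (completeBipartiteGraph (Fin m) (Fin n)).lapMatrix ℝ).det =
      x * (x - (m + n : ℝ)) * (x - (m : ℝ)) ^ (n - 1) * (x - (n : ℝ)) ^ (m - 1) := by
  intro x
  have : Nonempty (Fin m) := Fin.pos_iff_nonempty.mp hm
  have : Nonempty (Fin n) := Fin.pos_iff_nonempty.mp hn
  rw [det_smul_one_sub_eq_eval_charpoly, SimpleGraph.charpoly_lapMatrix_completeBipartiteGraph]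
  simp
end

section
/- (Pythagorean identity from generalized Cauchy–Binet.) For every real m×n matrix F, det(1_n + Fᵀ F) = ∑_P det(F_P)², where the sum runs over all pairs P = (R, C) with R a subset of the row indices, C a subset of the column indices, and |R| = |C| (including the empty pair, whose minor has determinant 1), and F_P denotes the square submatrix of F with rows R and columns C. -/
open Matrix Finset Equiv Function

variable {R : Type*} [CommRing R] {n : ℕ}

noncomputable def sumEquiv (S : Finset (Fin n)) : Fin S.card ⊕ Fin Sᶜ.card ≃ Fin n :=
  Equiv.ofBijective (Sum.elim (S.orderEmbOfFin rfl) (Sᶜ.orderEmbOfFin rfl))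
    ((Fintype.bijective_iff_injective_and_card _).2
      ⟨by
        rintro (a | a) (b | b) hab
        · exact congrArg Sum.inl ((S.orderEmbOfFin rfl).injective hab)
        · have hab' : (S.orderEmbOfFin rfl a : Fin n) = Sᶜ.orderEmbOfFin rfl b := hab
          exact absurd (hab' ▸ S.orderEmbOfFin_mem rfl a)
            (Finset.mem_compl.1 (Sᶜ.orderEmbOfFin_mem rfl b))
        · have hab' : (Sᶜ.orderEmbOfFin rfl a : Fin n) = S.orderEmbOfFin rfl b := hab
          exact absurd (S.orderEmbOfFin_mem rfl b)
            (Finset.mem_compl.1 (hab' ▸ Sᶜ.orderEmbOfFin_mem rfl a))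
        · exact congrArg Sum.inr ((Sᶜ.orderEmbOfFin rfl).injective hab),
      by
        simp only [Fintype.card_sum, Fintype.card_fin, Finset.card_compl]
        have := Finset.card_le_univ S
        simp only [Fintype.card_fin] at this ⊢
        omega⟩)

lemma sumEquiv_inl (S : Finset (Fin n)) (a : Fin S.card) :
    sumEquiv S (Sum.inl a) = S.orderEmbOfFin rfl a := rfl

lemma sumEquiv_inr (S : Finset (Fin n)) (a : Fin Sᶜ.card) :
    sumEquiv S (Sum.inr a) = Sᶜ.orderEmbOfFin rfl a := rfl

lemma det_piecewise (M : Matrix (Fin n) (Fin n) R) (S : Finset (Fin n)) :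
    det (Matrix.of (S.piecewise (1 : Matrix (Fin n) (Fin n) R) M)) =
      det (M.submatrix (Sᶜ.orderEmbOfFin rfl) (Sᶜ.orderEmbOfFin rfl)) := by
  rw [← det_submatrix_equiv_self (sumEquiv S)]
  have hblock : (Matrix.of (S.piecewise (1 : Matrix (Fin n) (Fin n) R) M)).submatrix
      (sumEquiv S) (sumEquiv S) =
      fromBlocks 1 0 (M.submatrix (Sᶜ.orderEmbOfFin rfl) (S.orderEmbOfFin rfl))
        (M.submatrix (Sᶜ.orderEmbOfFin rfl) (Sᶜ.orderEmbOfFin rfl)) := by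
    ext i j
    cases' i with a a <;> cases' j with b b <;>
      simp only [submatrix_apply, sumEquiv_inl, sumEquiv_inr, Matrix.of_apply,
        Finset.piecewise, fromBlocks_apply₁₁, fromBlocks_apply₁₂, fromBlocks_apply₂₁,
        fromBlocks_apply₂₂, Matrix.zero_apply]
    · rw [if_pos (S.orderEmbOfFin_mem rfl a)]
      simp [Matrix.one_apply, (S.orderEmbOfFin rfl).injective.eq_iff]
    · rw [if_pos (S.orderEmbOfFin_mem rfl a), Matrix.one_apply,
        if_neg]
      intro h
      exact Finset.mem_compl.1 (Sᶜ.orderEmbOfFin_mem rfl b) (h ▸ S.orderEmbOfFin_mem rfl a)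
    · rw [if_neg (Finset.mem_compl.1 (Sᶜ.orderEmbOfFin_mem rfl a))]
    · rw [if_neg (Finset.mem_compl.1 (Sᶜ.orderEmbOfFin_mem rfl a))]
  rw [hblock, det_fromBlocks_zero₁₂, det_one, one_mul]

lemma det_one_add_expand (M : Matrix (Fin n) (Fin n) R) :
    det (1 + M) =
      ∑ S : Finset (Fin n), det (M.submatrix (S.orderEmbOfFin rfl) (S.orderEmbOfFin rfl)) := by
  have h1 : det (1 + M) =
      ∑ S : Finset (Fin n), det (Matrix.of (S.piecewise (1 : Matrix (Fin n) (Fin n) R) M)) :=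
    MultilinearMap.map_add_univ
      (detRowAlternating : (Fin n → R) [⋀^Fin n]→ₗ[R] R).toMultilinearMap
      (fun i => (1 : Matrix (Fin n) (Fin n) R) i) (fun i => M i)
  rw [h1]
  simp_rw [det_piecewise]
  exact Fintype.sum_bijective (·ᶜ : Finset (Fin n) → Finset (Fin n))
    (Function.Involutive.bijective compl_compl) _ _ (fun S => by simp only [compl_compl])

variable {R : Type*} [CommRing R] {k m : ℕ}

lemma cb_aux (A : Matrix (Fin k) (Fin m) R) (B : Matrix (Fin m) (Fin k) R)
    {p : Fin k → Fin m} (H : ¬Function.Injective p) :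
    (∑ σ : Equiv.Perm (Fin k), (Equiv.Perm.sign σ : R) * ∏ x, A (σ x) (p x) * B (p x) x) = 0 := by
  obtain ⟨i, j, hpij, hij⟩ : ∃ i j, p i = p j ∧ i ≠ j := by
    rw [Function.Injective] at H; push_neg at H
    obtain ⟨i, j, h1, h2⟩ := H; exact ⟨i, j, h1, h2⟩
  exact Finset.sum_involution (fun σ _ => σ * Equiv.swap i j)
    (fun σ _ => by
      have : (∏ x, A (σ x) (p x)) = ∏ x, A ((σ * Equiv.swap i j) x) (p x) :=
        Fintype.prod_equiv (Equiv.swap i j) _ _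
          (by simp [Equiv.apply_swap_eq_self hpij])
      simp [this, Equiv.Perm.sign_swap hij, -Equiv.Perm.sign_swap', prod_mul_distrib])
    (fun σ _ _ => (not_congr Equiv.mul_swap_eq_iff).mpr hij)
    (fun _ _ => mem_univ _) fun σ _ => Equiv.mul_swap_involutive i j σ

lemma sum_perm_eq_det_mul_det (M N : Matrix (Fin k) (Fin k) R) :
    (∑ τ : Equiv.Perm (Fin k), ∑ σ : Equiv.Perm (Fin k),
      (Equiv.Perm.sign σ : R) * ∏ i, M (σ i) (τ i) * N (τ i) i) = det M * det N := by
  rw [← det_mul]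
  symm
  calc
    det (M * N) = ∑ p : Fin k → Fin k, ∑ σ : Equiv.Perm (Fin k),
        (Equiv.Perm.sign σ : R) * ∏ i, M (σ i) (p i) * N (p i) i := by
      simp only [det_apply', mul_apply, prod_univ_sum, mul_sum, Fintype.piFinset_univ]
      rw [Finset.sum_comm]
    _ = ∑ p : Fin k → Fin k with Function.Injective p, ∑ σ : Equiv.Perm (Fin k),
        (Equiv.Perm.sign σ : R) * ∏ i, M (σ i) (p i) * N (p i) i := by
      refine (Finset.sum_subset (filter_subset _ _) fun f _ hinj ↦ cb_aux M N ?_).symm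
      simpa only [true_and, mem_filter, mem_univ] using hinj
    _ = ∑ τ : Equiv.Perm (Fin k), ∑ σ : Equiv.Perm (Fin k),
        (Equiv.Perm.sign σ : R) * ∏ i, M (σ i) (τ i) * N (τ i) i :=
      Finset.sum_bij
        (fun p h ↦ Equiv.ofBijective p
          (Finite.injective_iff_bijective.1 (mem_filter.1 h).2))
        (fun _ _ ↦ mem_univ _)
        (fun _ _ _ _ h ↦ by injection h)
        (fun b _ ↦ ⟨b, mem_filter.2 ⟨mem_univ _, b.injective⟩, Equiv.coe_fn_injective rfl⟩)
        fun _ _ ↦ rfl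

lemma card_image_univ {p : Fin k → Fin m} (hp : Function.Injective p) :
    (Finset.image p univ).card = k := by
  rw [Finset.card_image_of_injective _ hp, card_univ, Fintype.card_fin]

/-- The permutation recording the relative order of the values of an injective map. -/
noncomputable def toPerm (p : Fin k → Fin m) (hp : Function.Injective p) : Equiv.Perm (Fin k) :=
  Equiv.ofBijective
    (fun j => ((Finset.image p univ).orderIsoOfFin (card_image_univ hp)).symm
      ⟨p j, Finset.mem_image_of_mem p (mem_univ j)⟩)
    (Finite.injective_iff_bijective.1 (fun a b hab => hp (by
      have := congrArg ((Finset.image p univ).orderIsoOfFin (card_image_univ hp)) hab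
      simpa [Subtype.ext_iff] using this)))

lemma orderEmbOfFin_toPerm {p : Fin k → Fin m} (hp : Function.Injective p) (j : Fin k) :
    (Finset.image p univ).orderEmbOfFin (card_image_univ hp) (toPerm p hp j) = p j := by
  simp only [toPerm, Equiv.ofBijective_apply]
  rw [← Finset.coe_orderIsoOfFin_apply, OrderIso.apply_symm_apply]

/-- **Generalized Cauchy–Binet.** -/
lemma det_mul_eq_sum_minors (A : Matrix (Fin k) (Fin m) R) (B : Matrix (Fin m) (Fin k) R) :
    det (A * B) = ∑ S : Finset (Fin m),
      if h : S.card = k then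
        det (A.submatrix id (S.orderEmbOfFin h)) * det (B.submatrix (S.orderEmbOfFin h) id)
      else 0 := by
  classical
  have step2 : det (A * B) = ∑ p : Fin k → Fin m with Function.Injective p,
      ∑ σ : Equiv.Perm (Fin k),
      (Equiv.Perm.sign σ : R) * ∏ i, A (σ i) (p i) * B (p i) i := by
    have step1 : det (A * B) = ∑ p : Fin k → Fin m, ∑ σ : Equiv.Perm (Fin k),
        (Equiv.Perm.sign σ : R) * ∏ i, A (σ i) (p i) * B (p i) i := by
      simp only [det_apply', mul_apply, prod_univ_sum, mul_sum, Fintype.piFinset_univ]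
      rw [Finset.sum_comm]
    rw [step1]
    refine (Finset.sum_subset (filter_subset _ _) fun f _ hinj ↦ cb_aux A B ?_).symm
    simpa only [true_and, mem_filter, mem_univ] using hinj
  set t : Finset ((_ : Finset (Fin m)) × Equiv.Perm (Fin k)) :=
    (univ.filter (fun S : Finset (Fin m) => S.card = k)).sigma (fun _ => univ) with ht
  have key : (∑ p : Fin k → Fin m with Function.Injective p,
      ∑ σ : Equiv.Perm (Fin k),
        (Equiv.Perm.sign σ : R) * ∏ i, A (σ i) (p i) * B (p i) i) =
      ∑ x ∈ t, if h : x.1.card = k then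
        (∑ σ : Equiv.Perm (Fin k), (Equiv.Perm.sign σ : R) *
          ∏ i, A (σ i) ((x.1.orderEmbOfFin h) (x.2 i)) * B ((x.1.orderEmbOfFin h) (x.2 i)) i)
      else 0 := by
    refine Finset.sum_bij'
      (fun p hp => ⟨Finset.image p univ, toPerm p (mem_filter.1 hp).2⟩)
      (fun x hx => (x.1.orderEmbOfFin ((mem_filter.1 (mem_sigma.1 hx).1).2)) ∘ x.2)
      ?_ ?_ ?_ ?_ ?_
    · intro p hp
      rw [ht, mem_sigma]
      exact ⟨mem_filter.2 ⟨mem_univ _, card_image_univ (mem_filter.1 hp).2⟩, mem_univ _⟩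
    · intro x hx
      exact mem_filter.2 ⟨mem_univ _,
        Function.Injective.comp (Finset.orderEmbOfFin _ _).injective x.2.injective⟩
    · -- left inverse
      intro p hp
      funext j
      exact orderEmbOfFin_toPerm (mem_filter.1 hp).2 j
    · -- right inverse
      rintro ⟨S, τ⟩ hx
      have hS : S.card = k := (mem_filter.1 (mem_sigma.1 hx).1).2
      have himg : Finset.image ((S.orderEmbOfFin hS) ∘ τ) univ = S := by
        apply Finset.coe_injective
        rw [Finset.coe_image, Finset.coe_univ, Set.image_univ, Set.range_comp,
          τ.surjective.range_eq, Set.image_univ, Finset.range_orderEmbOfFin]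
      have hp' : Function.Injective ((S.orderEmbOfFin hS) ∘ τ) :=
        Function.Injective.comp (Finset.orderEmbOfFin _ _).injective τ.injective
      have hemb : ∀ c : Fin k,
          (Finset.image ((S.orderEmbOfFin hS) ∘ τ) univ).orderEmbOfFin (card_image_univ hp') c
            = S.orderEmbOfFin hS c := fun c => by
        simp only [Finset.orderEmbOfFin_apply, himg]
      refine Sigma.ext himg ?_
      rw [heq_eq_eq]
      show toPerm (⇑(S.orderEmbOfFin hS) ∘ ⇑τ) hp' = τ
      ext j
      have heq : (S.orderEmbOfFin hS) (toPerm _ hp' j) = (S.orderEmbOfFin hS) (τ j) := by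
        rw [← hemb, orderEmbOfFin_toPerm hp']; rfl
      exact congrArg Fin.val ((S.orderEmbOfFin hS).injective heq)
    · -- values agree
      intro p hp
      rw [dif_pos (card_image_univ (mem_filter.1 hp).2)]
      refine Finset.sum_congr rfl fun σ _ => ?_
      congr 1
      refine Finset.prod_congr rfl fun i _ => ?_
      rw [orderEmbOfFin_toPerm (mem_filter.1 hp).2]
  rw [step2, key, ht, Finset.sum_sigma]
  rw [← Finset.sum_filter_add_sum_filter_not univ (fun S : Finset (Fin m) => S.card = k)]
  have h0 : ∑ S ∈ univ.filter (fun S : Finset (Fin m) => ¬ S.card = k),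
      (if h : S.card = k then
        det (A.submatrix id (S.orderEmbOfFin h)) * det (B.submatrix (S.orderEmbOfFin h) id)
      else 0) = 0 :=
    Finset.sum_eq_zero fun S hS => by rw [dif_neg (mem_filter.1 hS).2]
  rw [h0, add_zero]
  refine Finset.sum_congr rfl fun S hSmem => ?_
  have hS : S.card = k := (mem_filter.1 hSmem).2
  rw [dif_pos hS]
  calc (∑ τ : Equiv.Perm (Fin k), if h : S.card = k then
        (∑ σ : Equiv.Perm (Fin k), (Equiv.Perm.sign σ : R) *
          ∏ i, A (σ i) ((S.orderEmbOfFin h) (τ i)) * B ((S.orderEmbOfFin h) (τ i)) i)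
      else 0)
      = ∑ τ : Equiv.Perm (Fin k), ∑ σ : Equiv.Perm (Fin k), (Equiv.Perm.sign σ : R) *
          ∏ i, (A.submatrix id (S.orderEmbOfFin hS)) (σ i) (τ i) *
            (B.submatrix (S.orderEmbOfFin hS) id) (τ i) i := by
        refine Finset.sum_congr rfl fun τ _ => ?_
        rw [dif_pos hS]
        rfl
    _ = _ := sum_perm_eq_det_mul_det _ _

section Main

variable {m n : ℕ}

lemma minor_eq_aux (F : Matrix (Fin m) (Fin n) ℝ) (Rs : Finset (Fin m)) (C : Finset (Fin n))
    (h : Rs.card = C.card) :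
    (F.submatrix
        (fun i : Fin Rs.card => ((Rs.orderIsoOfFin rfl i : Fin m)))
        (fun j : Fin Rs.card => ((C.orderIsoOfFin h.symm j : Fin n)))).det =
      (F.submatrix (Rs.orderEmbOfFin h) (C.orderEmbOfFin rfl)).det := by
  have hmat : F.submatrix
        (fun i : Fin Rs.card => ((Rs.orderIsoOfFin rfl i : Fin m)))
        (fun j : Fin Rs.card => ((C.orderIsoOfFin h.symm j : Fin n))) =
      (F.submatrix (Rs.orderEmbOfFin h) (C.orderEmbOfFin rfl)).submatrix
        (finCongr h) (finCongr h) := by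
    ext i j
    simp only [submatrix_apply, Finset.coe_orderIsoOfFin_apply, Finset.orderEmbOfFin_apply,
      finCongr_apply, Fin.coe_cast, Fin.getElem_fin]
  rw [hmat]
  exact det_submatrix_equiv_self (finCongr h) _

/-- **Pythagorean identity from generalized Cauchy–Binet.**
For any real `m × n` matrix `F`, `det(1 + Fᵀ F)` equals the sum of the squares
of the determinants of all square minors of `F`: the sum runs over all pairs
`P = (R, C)` of a subset `R` of row indices and a subset `C` of column indices
with `|R| = |C|` (the empty minor having determinant `1`). -/
theorem det_one_add_transpose_mul_eq_sum_sq_minors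
    (m n : ℕ) (F : Matrix (Fin m) (Fin n) ℝ) :
    (1 + Fᵀ * F).det =
      ∑ R : Finset (Fin m), ∑ C : Finset (Fin n),
        if h : R.card = C.card then
          (F.submatrix
            (fun i : Fin R.card => ((R.orderIsoOfFin rfl i : Fin m)))
            (fun j : Fin R.card => ((C.orderIsoOfFin h.symm j : Fin n)))).det ^ 2
        else 0 := by
  rw [det_one_add_expand (Fᵀ * F), Finset.sum_comm]
  refine Finset.sum_congr rfl fun C _ => ?_
  have hsub : (Fᵀ * F).submatrix (C.orderEmbOfFin rfl) (C.orderEmbOfFin rfl)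
      = (Fᵀ.submatrix (C.orderEmbOfFin rfl) id) * (F.submatrix id (C.orderEmbOfFin rfl)) := by
    ext i j
    simp [mul_apply]
  rw [hsub, det_mul_eq_sum_minors]
  refine Finset.sum_congr rfl fun Rs _ => ?_
  by_cases h : Rs.card = C.card
  · rw [dif_pos h, dif_pos (show Rs.card = C.card from h)]
    have h1 : (Fᵀ.submatrix (C.orderEmbOfFin rfl) id).submatrix id (Rs.orderEmbOfFin h)
        = (F.submatrix (Rs.orderEmbOfFin h) (C.orderEmbOfFin rfl))ᵀ := by
      ext i j; simp
    have h2 : (F.submatrix id (C.orderEmbOfFin rfl)).submatrix (Rs.orderEmbOfFin h) id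
        = F.submatrix (Rs.orderEmbOfFin h) (C.orderEmbOfFin rfl) := by
      ext i j; simp
    rw [h1, h2, det_transpose, minor_eq_aux F Rs C h, sq]
  · rw [dif_neg h, dif_neg h]

end Main
end
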